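/- arXiv:1804.01384 — 7 statements merged into one kernel-verified Lean document; each statement's English description precedes it below -/
import Mathlib

section
/- Let X be a nonempty set and S a finite nonempty subset of Der(X). Then SS^{-1} ⊆ Der(X) ∪ {1} if and only if every vertex of the derangement action digraph DA(X,S) has out-valency exactly |S|. -/
/-! `s t⁻¹` fixes `t x` exactly when `s` and `t` agree at `x`, so `S S⁻¹ ⊆ Der(X) ∪ {1}` says that
evaluation at every point is injective on `S`; and the out-valency of `x` is `|S|` exactly when
evaluation at `x` is injective on `S`. -/

section

open Equiv

variable {X : Type*}

theorem Equiv.Perm.mul_inv_apply_ne_self_iff (s t : Perm X) :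
    (∀ x, (s * t⁻¹) x ≠ x) ↔ ∀ x, s x ≠ t x := by
  refine ⟨fun h x hx => h (t x) ?_, fun h x hx => h (t⁻¹ x) ?_⟩
  · simpa using hx
  · simpa [Perm.mul_apply] using hx

theorem forall_mul_inv_eq_one_or_derangement_iff_injOn (S : Set (Perm X)) :
    (∀ s ∈ S, ∀ t ∈ S, s * t⁻¹ = 1 ∨ ∀ x, (s * t⁻¹) x ≠ x) ↔
      ∀ x, Set.InjOn (fun s : Perm X => s x) S := by
  simp_rw [mul_inv_eq_one, Perm.mul_inv_apply_ne_self_iff]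
  constructor
  · intro h x s hs t ht hst
    exact (h s hs t ht).resolve_right fun hne => hne x hst
  · intro h s hs t ht
    by_cases hst : s = t
    · exact Or.inl hst
    · exact Or.inr fun x hx => hst (h x hs ht hx)

theorem ncard_outNeighbours_eq_card_image [DecidableEq X] (S : Finset (Perm X)) (x : X) :
    {y : X | ∃ s ∈ S, s x = y}.ncard = (S.image fun s => s x).card := by
  rw [← Set.ncard_coe_finset]
  congr
  ext y
  simp

end

theorem stmt1_general {X : Type*} (S : Finset (Equiv.Perm X)) :
    (∀ s ∈ S, ∀ t ∈ S, s * t⁻¹ = 1 ∨ ∀ x : X, (s * t⁻¹) x ≠ x) ↔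
      (∀ x : X, {y : X | ∃ s ∈ S, s x = y}.ncard = S.card) := by
  classical
  refine (forall_mul_inv_eq_one_or_derangement_iff_injOn (S : Set (Equiv.Perm X))).trans
    (forall_congr' fun x => ?_)
  rw [ncard_outNeighbours_eq_card_image, Finset.card_image_iff]

/-- SS⁻¹ ⊆ Der(X) ∪ {1} iff every vertex of DA(X,S) has out-valency |S|. -/
theorem stmt1 {X : Type*} [Nonempty X] (S : Finset (Equiv.Perm X)) (hS : S.Nonempty)
    (hDer : ∀ s ∈ S, ∀ x : X, s x ≠ x) :
    (∀ s ∈ S, ∀ t ∈ S, s * t⁻¹ = 1 ∨ ∀ x : X, (s * t⁻¹) x ≠ x) ↔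
      (∀ x : X, {y : X | ∃ s ∈ S, s x = y}.ncard = S.card) :=
  stmt1_general S
end

section
/- Let X be a nonempty set and S a finite nonempty subset of Der(X). Then SS^{-1} ⊆ Der(X) ∪ {1} if and only if every vertex of DA(X,S) has in-valency exactly |S|. -/
/-!
The in-neighbours of `y` in `DA(X, S)` are the points `s⁻¹ y` for `s ∈ S`, so `y` has in-valency
`|S|` exactly when `s ↦ s⁻¹ y` is injective on `S`. On the other hand `s t⁻¹` fixes `x` exactly
when `s⁻¹ x = t⁻¹ x`, so `SS⁻¹ ⊆ Der(X) ∪ {1}` says precisely that every map `s ↦ s⁻¹ x` is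
injective on `S`.
-/

namespace Equiv.Perm

variable {X : Type*}

theorem mul_inv_apply_eq_self_iff (s t : Perm X) (x : X) : (s * t⁻¹) x = x ↔ s⁻¹ x = t⁻¹ x := by
  rw [mul_apply, ← eq_inv_iff_eq, eq_comm]

theorem mul_inv_eq_one_or_fixedPointFree_iff (s t : Perm X) :
    (s * t⁻¹ = 1 ∨ ∀ x, (s * t⁻¹) x ≠ x) ↔ ∀ x, s⁻¹ x = t⁻¹ x → s = t := by
  simp only [mul_inv_eq_one, ne_eq, mul_inv_apply_eq_self_iff]
  constructor
  · rintro (rfl | hfree) x hx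
    · rfl
    · exact absurd hx (hfree x)
  · intro h
    by_cases hst : s = t
    · exact Or.inl hst
    · exact Or.inr fun x hx => hst (h x hx)

theorem setOf_exists_mem_apply_eq [DecidableEq X] (S : Finset (Perm X)) (y : X) :
    {x | ∃ s ∈ S, s x = y} = S.image (fun s => s⁻¹ y) := by
  ext x
  simp only [Set.mem_ofPred_eq, Finset.coe_image, Set.mem_image, Finset.mem_coe, inv_eq_iff_eq,
    eq_comm (a := y)]

theorem ncard_setOf_exists_mem_apply_eq_iff (S : Finset (Perm X)) (y : X) :
    {x | ∃ s ∈ S, s x = y}.ncard = S.card ↔ Set.InjOn (fun s : Perm X => s⁻¹ y) S := by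
  classical
  rw [setOf_exists_mem_apply_eq, Set.ncard_coe_finset, Finset.card_image_iff]

end Equiv.Perm

theorem stmt2_general {X : Type*} (S : Finset (Equiv.Perm X)) :
    (∀ s ∈ S, ∀ t ∈ S, s * t⁻¹ = 1 ∨ ∀ x : X, (s * t⁻¹) x ≠ x) ↔
      (∀ y : X, {x : X | ∃ s ∈ S, s x = y}.ncard = S.card) := by
  simp_rw [Equiv.Perm.mul_inv_eq_one_or_fixedPointFree_iff,
    Equiv.Perm.ncard_setOf_exists_mem_apply_eq_iff, Set.InjOn, Finset.mem_coe]
  exact ⟨fun h y s hs t ht hst => h s hs t ht y hst, fun h s hs t ht y hst => h y hs ht hst⟩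

/-- SS⁻¹ ⊆ Der(X) ∪ {1} iff every vertex of DA(X,S) has in-valency |S|. -/
theorem stmt2 {X : Type*} [Nonempty X] (S : Finset (Equiv.Perm X)) (hS : S.Nonempty)
    (hDer : ∀ s ∈ S, ∀ x : X, s x ≠ x) :
    (∀ s ∈ S, ∀ t ∈ S, s * t⁻¹ = 1 ∨ ∀ x : X, (s * t⁻¹) x ≠ x) ↔
      (∀ y : X, {x : X | ∃ s ∈ S, s x = y}.ncard = S.card) :=
  stmt2_general S
end

section
/- Let X be a nonempty set and S a finite nonempty subset of Der(X). Then DA(X,S) is a simple undirected graph that is regular of valency |S| if and only if S is closed, i.e., x^S = x^{S^{-1}} for all x ∈ X and SS^{-1} ⊆ Der(X) ∪ {1}. -/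
/-!
The out-neighbours of `x` in `DA(X,S)` are the points `s x` and its in-neighbours the
points `s⁻¹ x`, for `s ∈ S`. So `DA(X,S)` is undirected exactly when the two neighbourhoods
coincide, and both valencies equal `|S|` exactly when `s ↦ s x` is injective on `S` for
every `x`, which says that no `s * t⁻¹` with `s ≠ t` has a fixed point.
-/

namespace Equiv.Perm

variable {X : Type*}

theorem forall_injOn_apply_iff (S : Set (Perm X)) :
    (∀ x : X, Set.InjOn (fun s : Perm X => s x) S) ↔
      ∀ s ∈ S, ∀ t ∈ S, s * t⁻¹ = 1 ∨ ∀ x : X, (s * t⁻¹) x ≠ x := by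
  constructor
  · intro hinj s hs t ht
    refine or_iff_not_imp_right.mpr fun hfix => ?_
    push Not at hfix
    obtain ⟨x, hx⟩ := hfix
    rw [mul_inv_eq_one]
    exact hinj (t⁻¹ x) hs ht (hx.trans (t.apply_symm_apply x).symm)
  · intro hclosed x s hs t ht hst
    rcases hclosed s hs t ht with h | h
    · exact mul_inv_eq_one.mp h
    · exact absurd (by simpa using hst) (h (t x))

theorem forall_injOn_inv_apply_iff (S : Set (Perm X)) :
    (∀ y : X, Set.InjOn (fun s : Perm X => s⁻¹ y) S) ↔
      ∀ x : X, Set.InjOn (fun s : Perm X => s x) S := by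
  constructor
  · intro hinj x s hs t ht (hst : s x = t x)
    refine hinj (s x) hs ht ?_
    calc s⁻¹ (s x) = x := s.symm_apply_apply x
      _ = t⁻¹ (t x) := (t.symm_apply_apply x).symm
      _ = t⁻¹ (s x) := by rw [hst]
  · intro hinj y s hs t ht (hst : s⁻¹ y = t⁻¹ y)
    refine hinj (s⁻¹ y) hs ht ?_
    calc s (s⁻¹ y) = y := s.apply_symm_apply y
      _ = t (t⁻¹ y) := (t.apply_symm_apply y).symm
      _ = t (s⁻¹ y) := by rw [hst]

theorem ncard_setOf_apply_eq_card_iff (S : Finset (Perm X)) (x : X) :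
    {y : X | ∃ s ∈ S, s x = y}.ncard = S.card ↔
      Set.InjOn (fun s : Perm X => s x) S := by
  rw [← Set.ncard_coe_finset, ← Set.ncard_image_iff S.finite_toSet]
  rfl

theorem ncard_setOf_apply_eq_eq_card_iff (S : Finset (Perm X)) (y : X) :
    {x : X | ∃ s ∈ S, s x = y}.ncard = S.card ↔
      Set.InjOn (fun s : Perm X => s⁻¹ y) S := by
  have : {x : X | ∃ s ∈ S, s x = y} = (fun s : Perm X => s⁻¹ y) '' S := by
    ext x
    simp only [Set.mem_ofPred_eq, Set.mem_image, Finset.mem_coe, inv_eq_iff_eq, eq_comm (a := y)]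
  rw [this, ← Set.ncard_coe_finset, Set.ncard_image_iff S.finite_toSet]

theorem forall_setOf_apply_eq_setOf_inv_apply_iff (S : Set (Perm X)) :
    (∀ x : X, {y : X | ∃ s ∈ S, s x = y} = {y : X | ∃ s ∈ S, s⁻¹ x = y}) ↔
      ∀ x y : X, (∃ s ∈ S, s x = y) → ∃ s ∈ S, s y = x := by
  constructor
  · intro h x y hxy
    obtain ⟨s, hs, hsy⟩ : y ∈ {y : X | ∃ s ∈ S, s⁻¹ x = y} := h x ▸ hxy
    exact ⟨s, hs, hsy ▸ s.apply_symm_apply x⟩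
  · intro h x
    ext y
    constructor
    · intro hxy
      obtain ⟨s, hs, rfl⟩ := h x y hxy
      exact ⟨s, hs, s.symm_apply_apply y⟩
    · rintro ⟨s, hs, rfl⟩
      exact h _ _ ⟨s, hs, s.apply_symm_apply x⟩

end Equiv.Perm

theorem stmt4_general {X : Type*} (S : Finset (Equiv.Perm X)) :
    ((∀ x y : X, (∃ s ∈ S, s x = y) → (∃ s ∈ S, s y = x)) ∧
      (∀ x : X, {y : X | ∃ s ∈ S, s x = y}.ncard = S.card) ∧
      (∀ y : X, {x : X | ∃ s ∈ S, s x = y}.ncard = S.card)) ↔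
      ((∀ x : X, {y : X | ∃ s ∈ S, s x = y} = {y : X | ∃ s ∈ S, s⁻¹ x = y}) ∧
        (∀ s ∈ S, ∀ t ∈ S, s * t⁻¹ = 1 ∨ ∀ x : X, (s * t⁻¹) x ≠ x)) := by
  rw [forall_congr' (Equiv.Perm.ncard_setOf_apply_eq_card_iff S),
    forall_congr' (Equiv.Perm.ncard_setOf_apply_eq_eq_card_iff S),
    Equiv.Perm.forall_injOn_inv_apply_iff, and_self]
  exact and_congr
    (Equiv.Perm.forall_setOf_apply_eq_setOf_inv_apply_iff (S : Set (Equiv.Perm X))).symm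
    (Equiv.Perm.forall_injOn_apply_iff (S : Set (Equiv.Perm X)))

/-- DA(X,S) is a simple undirected graph, regular of valency |S|, iff S is closed. -/
theorem stmt4 {X : Type*} [Nonempty X] (S : Finset (Equiv.Perm X)) (hS : S.Nonempty)
    (hDer : ∀ s ∈ S, ∀ x : X, s x ≠ x) :
    ((∀ x y : X, (∃ s ∈ S, s x = y) → (∃ s ∈ S, s y = x)) ∧
      (∀ x : X, {y : X | ∃ s ∈ S, s x = y}.ncard = S.card) ∧
      (∀ y : X, {x : X | ∃ s ∈ S, s x = y}.ncard = S.card)) ↔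
      ((∀ x : X, {y : X | ∃ s ∈ S, s x = y} = {y : X | ∃ s ∈ S, s⁻¹ x = y}) ∧
        (∀ s ∈ S, ∀ t ∈ S, s * t⁻¹ = 1 ∨ ∀ x : X, (s * t⁻¹) x ≠ x)) :=
  stmt4_general S
end

section
/- Every finite simple regular graph of even valency 2n (n ≥ 1) can be expressed as DA(X,S) for some closed, self-inverse subset S ⊆ Der(X). -/
/-!
Orient the `2n`-regular graph so that every vertex has in- and out-degree `n`: by Hall's theorem,
`n` copies of each vertex can be matched injectively to incident edges, and by the handshake lemma
this matching uses every edge exactly once; orient each edge away from its vertex. An `n`-regular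
digraph is, by Hall's theorem again (König), a union of `n` arc-disjoint permutations `P`.
Take `S = P ∪ P⁻¹`. Since the orientation never contains both `(x, y)` and `(y, x)`, two members
of `S` that agree at one point are equal, which is exactly the closedness of `S`.
-/

section

open Finset Function

variable {X : Type*}

theorem ncard_setOf_eq_card_filter [Fintype X] (p : X → Prop) [DecidablePred p] :
    {x | p x}.ncard = #{x | p x} := by
  rw [Set.ncard_eq_toFinset_card', Set.toFinset_ofPred]

theorem exists_perm_forall_mem_of_degree_bounds [Fintype X] (D : Set (X × X)) {k : ℕ}
    (hk : k ≠ 0) (hout : ∀ x, k ≤ {y | (x, y) ∈ D}.ncard)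
    (hin : ∀ y, {x | (x, y) ∈ D}.ncard ≤ k) :
    ∃ σ : Equiv.Perm X, ∀ x, (x, σ x) ∈ D := by
  classical
  simp only [ncard_setOf_eq_card_filter] at hout hin
  let t (x : X) : Finset X := {y | (x, y) ∈ D}
  have hall (s : Finset X) : #s ≤ #(s.biUnion t) := by
    refine le_of_mul_le_mul_right (card_mul_le_card_mul (fun x y => (x, y) ∈ D) ?_ ?_)
      (Nat.pos_of_ne_zero hk)
    · exact fun x hx => (hout x).trans <| card_le_card fun y hy =>
        mem_filter.mpr ⟨mem_biUnion.mpr ⟨x, hx, hy⟩, (mem_filter.mp hy).2⟩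
    · exact fun y _ => (card_le_card fun x => by simp [bipartiteBelow]).trans (hin y)
  obtain ⟨f, hinj, hf⟩ := (all_card_le_biUnion_card_iff_exists_injective t).mp hall
  exact ⟨Equiv.ofBijective f hinj.bijective_of_finite, fun x => by simpa [t] using hf x⟩

namespace Equiv.Perm

open scoped Pointwise

/-- The arc set of the digraph `DA(X, S)`. -/
def arcs (S : Set (Perm X)) : Set (X × X) := {p | ∃ s ∈ S, s p.1 = p.2}

def ArcDisjoint (S : Set (Perm X)) : Prop := ∀ s ∈ S, ∀ t ∈ S, ∀ x, s x = t x → s = t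

variable {S P : Set (Perm X)}

theorem arcs_singleton (σ : Perm X) : arcs {σ} = {p | σ p.1 = p.2} := by
  simp [arcs]

theorem arcs_union (S T : Set (Perm X)) : arcs (S ∪ T) = arcs S ∪ arcs T := by
  ext p
  simp only [arcs, Set.mem_union, Set.mem_ofPred_eq, or_and_right, exists_or]

theorem arcs_inv : arcs S⁻¹ = Prod.swap ⁻¹' arcs S := by
  ext ⟨x, y⟩
  simp only [arcs, Set.mem_ofPred_eq, Set.mem_inv, Set.mem_preimage, Prod.swap_prod_mk]
  exact ⟨fun ⟨s, hs, h⟩ => ⟨s⁻¹, hs, by simp [← h]⟩,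
    fun ⟨s, hs, h⟩ => ⟨s⁻¹, by rwa [inv_inv], by simp [← h]⟩⟩

theorem ArcDisjoint.insert (hS : ArcDisjoint S) {σ : Perm X}
    (hσ : _root_.Disjoint (arcs {σ}) (arcs S)) : ArcDisjoint (insert σ S) := by
  have key (t) (ht : t ∈ S) (x) (h : σ x = t x) : False :=
    Set.disjoint_left.mp hσ (show (x, σ x) ∈ arcs {σ} by simp [arcs_singleton])
      ⟨t, ht, h.symm⟩
  rintro s (rfl | hs) t (rfl | ht) x h
  exacts [rfl, (key t ht x h).elim, (key s hs x h.symm).elim, hS s hs t ht x h]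

theorem ArcDisjoint.union_inv (hP : ArcDisjoint P)
    (hanti : ∀ x y, (x, y) ∈ arcs P → (y, x) ∉ arcs P) : ArcDisjoint (P ∪ P⁻¹) := by
  have key (s) (hs : s ∈ P) (t) (ht : t⁻¹ ∈ P) (x) (h : s x = t x) : False :=
    hanti x (s x) ⟨s, hs, rfl⟩ ⟨t⁻¹, ht, by simp [h]⟩
  rintro s (hs | hs) t (ht | ht) x h
  · exact hP s hs t ht x h
  · exact (key s hs t ht x h).elim
  · exact (key t ht s hs x h.symm).elim
  · refine inv_injective (hP _ hs _ ht (s x) ?_)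
    nth_rw 2 [h]
    simp

theorem ArcDisjoint.mul_inv_eq_one_or (hS : ArcDisjoint S) {s t : Perm X} (hs : s ∈ S)
    (ht : t ∈ S) : s * t⁻¹ = 1 ∨ ∀ x, (s * t⁻¹) x ≠ x := by
  refine or_iff_not_imp_right.mpr fun h => ?_
  push Not at h
  obtain ⟨x, hx⟩ := h
  rw [hS s hs t ht (t⁻¹ x) (by simpa using hx), mul_inv_cancel]

theorem setOf_apply_eq_setOf_inv_apply (hS : S⁻¹ = S) (x : X) :
    {y | ∃ s ∈ S, s x = y} = {y | ∃ s ∈ S, s⁻¹ x = y} := by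
  ext y
  constructor
  · rintro ⟨s, hs, rfl⟩
    exact ⟨s⁻¹, by rwa [← Set.mem_inv, hS], by rw [inv_inv]⟩
  · rintro ⟨s, hs, rfl⟩
    exact ⟨s⁻¹, by rwa [← Set.mem_inv, hS], rfl⟩

theorem exists_arcDisjoint_arcs_eq_of_degree [Fintype X] (k : ℕ) (D : Set (X × X))
    (hout : ∀ x, {y | (x, y) ∈ D}.ncard = k) (hin : ∀ y, {x | (x, y) ∈ D}.ncard = k) :
    ∃ P : Set (Perm X), ArcDisjoint P ∧ arcs P = D := by
  induction k generalizing D with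
  | zero =>
    refine ⟨∅, by simp [ArcDisjoint], ?_⟩
    ext ⟨x, y⟩
    have hx : {y | (x, y) ∈ D} = ∅ := (Set.ncard_eq_zero).mp (hout x)
    simpa [arcs] using Set.eq_empty_iff_forall_notMem.mp hx y
  | succ k ih =>
    obtain ⟨σ, hσ⟩ := exists_perm_forall_mem_of_degree_bounds D k.succ_ne_zero
      (fun x => (hout x).ge) (fun y => (hin y).le)
    have hσD : arcs {σ} ⊆ D := by
      rw [arcs_singleton]
      rintro ⟨x, y⟩ (rfl : σ x = y)
      exact hσ x
    have hout' (x) : {y | (x, y) ∈ D \ arcs {σ}}.ncard = k := by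
      have : {y | (x, y) ∈ D \ arcs {σ}} = {y | (x, y) ∈ D} \ {σ x} := by
        ext y
        simp [arcs_singleton, eq_comm]
      rw [this, Set.ncard_sdiff_singleton_of_mem (by exact hσ x), hout, Nat.add_sub_cancel]
    have hin' (y) : {x | (x, y) ∈ D \ arcs {σ}}.ncard = k := by
      have : {x | (x, y) ∈ D \ arcs {σ}} = {x | (x, y) ∈ D} \ {σ⁻¹ y} := by
        ext x
        simp [arcs_singleton, Equiv.eq_symm_apply]
      rw [this, Set.ncard_sdiff_singleton_of_mem (by simpa using hσ (σ⁻¹ y)), hin,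
        Nat.add_sub_cancel]
    obtain ⟨P, hP, hPD⟩ := ih (D \ arcs {σ}) hout' hin'
    refine ⟨insert σ P, hP.insert (hPD ▸ Set.disjoint_sdiff_right), ?_⟩
    rw [Set.insert_eq, arcs_union, hPD, Set.union_sdiff_cancel hσD]

end Equiv.Perm

namespace SimpleGraph

variable (G : SimpleGraph X)

theorem ncard_neighborSet_eq_degree (x : X) [Fintype (G.neighborSet x)] :
    (G.neighborSet x).ncard = G.degree x := by
  rw [← Nat.card_coe_set_eq, Nat.card_eq_fintype_card, card_neighborSet_eq_degree]

variable [Fintype X] [DecidableEq X] [DecidableRel G.Adj]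

theorem exists_injective_mem_incidenceFinset {n : ℕ} (hG : ∀ x, 2 * n ≤ G.degree x) :
    ∃ f : X × Fin n → Sym2 X, Injective f ∧ ∀ z, f z ∈ G.incidenceFinset z.1 := by
  refine (all_card_le_biUnion_card_iff_exists_injective _).mp fun T => ?_
  set W := T.image Prod.fst
  have hTW : #T ≤ #W * n := calc
    #T ≤ #(W ×ˢ (univ : Finset (Fin n))) :=
      card_le_card fun z hz => mem_product.mpr ⟨mem_image_of_mem _ hz, mem_univ _⟩
    _ = #W * n := by rw [card_product, card_univ, Fintype.card_fin]
  have hunion :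
      T.biUnion (fun z => G.incidenceFinset z.1) = W.biUnion fun x => G.incidenceFinset x := by
    ext e
    simp [W]
  -- each vertex of `W` lies on at least `2 n` of these edges, and each edge has at most two ends
  have hcount : #W * (2 * n) ≤ #(W.biUnion fun x => G.incidenceFinset x) * 2 := by
    refine card_mul_le_card_mul (fun x e => x ∈ e) (fun x hx => ?_) (fun e _ => ?_)
    · refine (hG x).trans ((G.card_incidenceFinset_eq_degree x).symm.trans_le (card_le_card ?_))
      exact fun e he =>
        mem_filter.mpr ⟨mem_biUnion.mpr ⟨x, hx, he⟩, ((G.mem_incidenceFinset x e).mp he).2⟩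
    · calc #(W.bipartiteBelow (fun x e => x ∈ e) e) ≤ #e.toFinset :=
            card_le_card fun x hx => Sym2.mem_toFinset.mpr (mem_filter.mp hx).2
        _ ≤ 2 := by rw [Sym2.card_toFinset]; split_ifs <;> norm_num
  rw [hunion]
  exact hTW.trans (by linarith)

theorem exists_orientation_of_isRegularOfDegree {n : ℕ} (hG : G.IsRegularOfDegree (2 * n)) :
    ∃ D : Set (X × X), (∀ x y, G.Adj x y ↔ (x, y) ∈ D ∨ (y, x) ∈ D) ∧
      (∀ x y, (x, y) ∈ D → (y, x) ∉ D) ∧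
      (∀ x, {y | (x, y) ∈ D}.ncard = n) ∧ ∀ y, {x | (x, y) ∈ D}.ncard = n := by
  obtain ⟨f, hf, hfG⟩ := G.exists_injective_mem_incidenceFinset fun x => (hG x).ge
  have hfG' (z) : f z ∈ G.edgeSet ∧ z.1 ∈ f z := (G.mem_incidenceFinset _ _).mp (hfG z)
  -- by the handshake lemma there are exactly as many edges as slots `(x, i)`
  have hsurj : univ.image f = G.edgeFinset := by
    refine eq_of_subset_of_card_le (fun e he => ?_) ?_
    · obtain ⟨z, -, rfl⟩ := mem_image.mp he
      exact G.mem_edgeFinset.mpr (hfG' z).1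
    · have := G.sum_degrees_eq_twice_card_edges
      simp only [hG.degree_eq, sum_const, card_univ, smul_eq_mul] at this
      rw [card_image_of_injective _ hf, card_univ, Fintype.card_prod, Fintype.card_fin]
      linarith
  set D : Set (X × X) := {p | ∃ i, f (p.1, i) = s(p.1, p.2)}
  have hadj (x y) (hxy : (x, y) ∈ D) : G.Adj x y := by
    obtain ⟨i, hi⟩ := hxy
    simpa [hi] using (hfG' (x, i)).1
  have hanti (x y) (hxy : (x, y) ∈ D) : (y, x) ∉ D := by
    rintro ⟨j, hj⟩
    obtain ⟨i, hi⟩ := hxy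
    have : (x, i) = (y, j) := hf (hi.trans (Sym2.eq_swap.trans hj.symm))
    exact G.ne_of_adj (hadj x y ⟨i, hi⟩) congr($this.1)
  have hcover (x y) (hxy : G.Adj x y) : (x, y) ∈ D ∨ (y, x) ∈ D := by
    have hxy' : s(x, y) ∈ univ.image f := hsurj ▸ G.mem_edgeFinset.mpr (G.mem_edgeSet.mpr hxy)
    obtain ⟨⟨z, i⟩, -, hz⟩ := mem_image.mp hxy'
    have hzxy : z ∈ s(x, y) := hz ▸ (hfG' (z, i)).2
    rcases Sym2.mem_iff.mp hzxy with rfl | rfl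
    · exact .inl ⟨i, hz⟩
    · exact .inr ⟨i, hz.trans Sym2.eq_swap⟩
  have hout (x) : {y | (x, y) ∈ D}.ncard = n := by
    let other (i : Fin n) : X := Sym2.Mem.other (hfG' (x, i)).2
    have hother (i) : f (x, i) = s(x, other i) := (Sym2.other_spec _).symm
    have hrange : {y | (x, y) ∈ D} = Set.range other := by
      ext y
      simp only [Set.mem_ofPred_eq, Set.mem_range, D, hother, Sym2.congr_right]
    rw [hrange, Set.ncard_range_of_injective, Nat.card_eq_fintype_card, Fintype.card_fin]
    intro i j hij
    exact (Prod.ext_iff.mp (hf ((hother i).trans (hij ▸ (hother j).symm)))).2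
  have hadj_iff (x y) : G.Adj x y ↔ (x, y) ∈ D ∨ (y, x) ∈ D :=
    ⟨hcover x y, fun h => h.elim (hadj x y) fun h => (hadj y x h).symm⟩
  refine ⟨D, hadj_iff, hanti, hout, fun y => ?_⟩
  have hnbr : G.neighborSet y = {x | (y, x) ∈ D} ∪ {x | (x, y) ∈ D} := by
    ext x
    exact hadj_iff y x
  have hdisj : Disjoint {x | (y, x) ∈ D} {x | (x, y) ∈ D} :=
    Set.disjoint_left.mpr fun x => hanti y x
  have hdeg := hG.degree_eq y
  rw [← ncard_neighborSet_eq_degree, hnbr, Set.ncard_union_eq hdisj, hout] at hdeg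
  omega

end SimpleGraph

end

theorem stmt8_general {X : Type*} [Fintype X] (A : Set (X × X)) (n : ℕ)
    (hsimple : ∀ p ∈ A, p.1 ≠ p.2)
    (hsym : ∀ p ∈ A, (Prod.snd p, Prod.fst p) ∈ A)
    (hreg : ∀ x : X, {y : X | (x, y) ∈ A}.ncard = 2 * n) :
    ∃ S : Set (Equiv.Perm X),
      (∀ s ∈ S, ∀ x : X, s x ≠ x) ∧
      (∀ s : Equiv.Perm X, s ∈ S ↔ s⁻¹ ∈ S) ∧
      (∀ x : X, {y : X | ∃ s ∈ S, s x = y} = {y : X | ∃ s ∈ S, s⁻¹ x = y}) ∧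
      (∀ s ∈ S, ∀ t ∈ S, s * t⁻¹ = 1 ∨ ∀ x : X, (s * t⁻¹) x ≠ x) ∧
      A = {p : X × X | ∃ s ∈ S, s p.1 = p.2} := by
  classical
  let G : SimpleGraph X :=
    { Adj x y := (x, y) ∈ A
      symm := ⟨fun x y => hsym (x, y)⟩
      loopless := ⟨fun x h => hsimple _ h rfl⟩ }
  have hG : G.IsRegularOfDegree (2 * n) := fun x =>
    (G.ncard_neighborSet_eq_degree x).symm.trans (hreg x)
  obtain ⟨D, hGD, hanti, hout, hin⟩ := G.exists_orientation_of_isRegularOfDegree hG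
  obtain ⟨P, hP, rfl⟩ := Equiv.Perm.exists_arcDisjoint_arcs_eq_of_degree n D hout hin
  have hA : A = Equiv.Perm.arcs (P ∪ P⁻¹) := by
    ext ⟨x, y⟩
    rw [Equiv.Perm.arcs_union, Equiv.Perm.arcs_inv]
    exact hGD x y
  have hS : (P ∪ P⁻¹)⁻¹ = P ∪ P⁻¹ := by rw [Set.union_inv, inv_inv, Set.union_comm]
  refine ⟨P ∪ P⁻¹, fun s hs x hx => hsimple (x, x) (hA ▸ ⟨s, hs, hx⟩) rfl,
    fun s => by rw [← Set.mem_inv, hS], Equiv.Perm.setOf_apply_eq_setOf_inv_apply hS,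
    fun s hs t ht => (hP.union_inv hanti).mul_inv_eq_one_or hs ht, hA⟩

/-- every finite simple regular graph of even valency 2n (n ≥ 1) is DA(X,S)
for some closed self-inverse S ⊆ Der(X). -/
theorem stmt8 {X : Type*} [Fintype X] (A : Set (X × X)) (n : ℕ) (hn : 1 ≤ n)
    (hsimple : ∀ p ∈ A, p.1 ≠ p.2)
    (hsym : ∀ p ∈ A, (Prod.snd p, Prod.fst p) ∈ A)
    (hreg : ∀ x : X, {y : X | (x, y) ∈ A}.ncard = 2 * n) :
    ∃ S : Set (Equiv.Perm X),
      (∀ s ∈ S, ∀ x : X, s x ≠ x) ∧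
      (∀ s : Equiv.Perm X, s ∈ S ↔ s⁻¹ ∈ S) ∧
      (∀ x : X, {y : X | ∃ s ∈ S, s x = y} = {y : X | ∃ s ∈ S, s⁻¹ x = y}) ∧
      (∀ s ∈ S, ∀ t ∈ S, s * t⁻¹ = 1 ∨ ∀ x : X, (s * t⁻¹) x ≠ x) ∧
      A = {p : X × X | ∃ s ∈ S, s p.1 = p.2} :=
  stmt8_general A n hsimple hsym hreg
end

section
/- Let Γ = (X,A) be a finite simple graph of odd valency k that equals DA(X,S) for some closed self-inverse subset S ⊆ Der(X). Then Γ has a perfect matching; in particular S contains an involution s with s = s^{-1}, and DA(X,{s}) is a perfect matching of Γ. -/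
/-!
Inversion pairs off the elements of `S` that are not involutions, so an odd `S` must contain an
involution `s`; its arcs `(x, s x)` form a perfect matching of `DA(X, S)`.
-/

theorem Finset.exists_apply_eq_self_of_odd_card {α : Type*} {s : Finset α} (f : α → α)
    (hmaps : ∀ a ∈ s, f a ∈ s) (hinvol : ∀ a ∈ s, f (f a) = a) (hodd : Odd s.card) :
    ∃ a ∈ s, f a = a := by
  by_contra! hfree
  -- without fixed points `f` pairs the factors of `∏ _ ∈ s, -1`, so the product would be `1`
  have hprod : ∏ _a ∈ s, (-1 : ℤ) = 1 :=
    Finset.prod_involution (fun a _ => f a) (fun _ _ => by ring) (fun a ha _ => hfree a ha)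
      hmaps hinvol
  rw [Finset.prod_const, hodd.neg_one_pow] at hprod
  exact absurd hprod (by decide)

theorem stmt10_general {X : Type*} (S : Finset (Equiv.Perm X))
    (hinv : ∀ s ∈ S, s⁻¹ ∈ S)
    (hodd : Odd S.card) :
    ∃ s ∈ S, s⁻¹ = s ∧
      {p : X × X | s p.1 = p.2} ⊆ {p : X × X | ∃ t ∈ S, t p.1 = p.2} ∧
      (∀ p : X × X, s p.1 = p.2 → s p.2 = p.1) ∧
      (∀ x : X, ∃! y : X, s x = y) := by
  obtain ⟨s, hs, hss⟩ :=
    Finset.exists_apply_eq_self_of_odd_card (· ⁻¹) hinv (fun s _ => inv_inv s) hodd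
  refine ⟨s, hs, hss, fun p hp => ⟨s, hs, hp⟩, fun p hp => ?_,
    fun x => ⟨s x, rfl, fun _ => Eq.symm⟩⟩
  rw [← hp, ← Equiv.Perm.eq_inv_iff_eq, hss]

/-- if the finite simple graph Γ = DA(X,S), with S a closed self-inverse
subset of Der(X) of odd cardinality (so Γ has odd valency |S|), then S contains an
involution s, and DA(X,{s}) is a perfect matching of Γ. -/
theorem stmt10 {X : Type*} [Fintype X] (S : Finset (Equiv.Perm X))
    (hDer : ∀ s ∈ S, ∀ x : X, s x ≠ x)
    (hinv : ∀ s ∈ S, s⁻¹ ∈ S)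
    (hclosed1 : ∀ x : X, {y : X | ∃ s ∈ S, s x = y} = {y : X | ∃ s ∈ S, s⁻¹ x = y})
    (hclosed2 : ∀ s ∈ S, ∀ t ∈ S, s * t⁻¹ = 1 ∨ ∀ x : X, (s * t⁻¹) x ≠ x)
    (hodd : Odd S.card) :
    ∃ s ∈ S, s⁻¹ = s ∧
      {p : X × X | s p.1 = p.2} ⊆ {p : X × X | ∃ t ∈ S, t p.1 = p.2} ∧
      (∀ p : X × X, s p.1 = p.2 → s p.2 = p.1) ∧
      (∀ x : X, ∃! y : X, s x = y) :=
  stmt10_general S hinv hodd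
end

section
/- Every finite regular bipartite simple graph can be expressed as DA(X,S) for some closed, self-inverse subset S ⊆ Der(X). -/
/-!
Since `A` is symmetric and `k`-regular, every vertex also has in-degree `k`, so double counting
gives Hall's condition and hence a permutation `f` with `(x, f x) ∈ A` for all `x`. As `f` swaps
the two sides of the bipartition, `f` on one side and `f⁻¹` on the other is an involution `σ`
whose graph lies in `A`, i.e. a perfect matching. Removing it leaves a `(k - 1)`-regular bipartite
graph, so by induction `A` is the union of the graphs of `k` involutions which pairwise disagree at
every point. Such a set `S` is self-inverse, and it is closed: `(s * t⁻¹) x = x` says that `s` and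
`t` agree at `t⁻¹ x`.
-/

open Finset Equiv

theorem Finset.card_le_card_biUnion_of_degree_bounds {α β : Type*} [Fintype α] [DecidableEq β]
    (N : α → Finset β) {k : ℕ} (hk : 0 < k) (hout : ∀ a, k ≤ #(N a))
    (hin : ∀ b, #{a | b ∈ N a} ≤ k) (s : Finset α) : #s ≤ #(s.biUnion N) := by
  refine Nat.le_of_mul_le_mul_right ?_ hk
  refine card_mul_le_card_mul (fun a b => b ∈ N a) (fun a ha => ?_) (fun b _ => ?_)
  · rw [bipartiteAbove, filter_mem_eq_inter, inter_eq_right.mpr (subset_biUnion_of_mem N ha)]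
    exact hout a
  · exact (card_le_card (filter_subset_filter _ (subset_univ s))).trans (hin b)

theorem exists_perm_forall_mem_of_regular {X : Type*} [Finite X] {A : Set (X × X)} {k : ℕ}
    (hk : 0 < k) (hsym : ∀ p ∈ A, (p.2, p.1) ∈ A) (hreg : ∀ x, {y | (x, y) ∈ A}.ncard = k) :
    ∃ f : Perm X, ∀ x, (x, f x) ∈ A := by
  classical
  have := Fintype.ofFinite X
  have hin : ∀ y, {x | (x, y) ∈ A}.ncard = k := fun y => by
    rw [← hreg y]
    congr 1
    ext x
    exact ⟨hsym _, hsym (y, x)⟩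
  obtain ⟨f, hf_inj, hf⟩ := (all_card_le_biUnion_card_iff_exists_injective
    fun x => {y | (x, y) ∈ A}.toFinset).mp <| card_le_card_biUnion_of_degree_bounds _ hk
      (fun x => by rw [← Set.ncard_eq_toFinset_card', hreg])
      (fun y => by
        simp only [Set.mem_toFinset, Set.mem_ofPred_eq]
        rw [← hin y, Set.ncard_eq_toFinset_card', Set.toFinset_ofPred])
  exact ⟨Equiv.ofBijective f (Finite.injective_iff_bijective.mp hf_inj),
    fun x => by simpa using hf x⟩

theorem Equiv.Perm.involutive_ite_of_swaps {X : Type*} (f : Perm X) (P : X → Prop)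
    [DecidablePred P] (hswap : ∀ x, P (f x) ↔ ¬ P x) :
    Function.Involutive fun x => if P x then f x else f.symm x := by
  intro x
  by_cases hx : P x
  · simp [hx, hswap]
  · have : P (f.symm x) := by simpa [hx] using hswap (f.symm x)
    simp [hx, this]

theorem exists_involution_forall_mem_of_regular_bipartite {X : Type*} [Finite X]
    {A : Set (X × X)} {k : ℕ} (hk : 0 < k) (hsym : ∀ p ∈ A, (p.2, p.1) ∈ A)
    (hreg : ∀ x, {y | (x, y) ∈ A}.ncard = k)
    {P : X → Prop} (hP : ∀ p ∈ A, (P p.1 ↔ ¬ P p.2)) :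
    ∃ σ : Perm X, σ⁻¹ = σ ∧ ∀ x, (x, σ x) ∈ A := by
  classical
  obtain ⟨f, hf⟩ := exists_perm_forall_mem_of_regular hk hsym hreg
  have hσ := f.involutive_ite_of_swaps P fun x => by have := hP _ (hf x); tauto
  refine ⟨hσ.toPerm _, hσ.toPerm_symm, fun x => ?_⟩
  dsimp only [Function.Involutive.coe_toPerm]
  split_ifs
  · exact hf x
  · simpa using hsym _ (hf (f.symm x))

/-- `DA(X, S)` in the paper. -/
def permArcs {X : Type*} (S : Set (Perm X)) : Set (X × X) := {p | ∃ s ∈ S, s p.1 = p.2}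

theorem permArcs_insert {X : Type*} (σ : Perm X) (S : Set (Perm X)) :
    permArcs (insert σ S) = {p | σ p.1 = p.2} ∪ permArcs S := by
  ext p
  simp [permArcs]

theorem exists_involutions_permArcs_eq_of_regular_bipartite {X : Type*} [Finite X] (k : ℕ)
    {A : Set (X × X)} (hsym : ∀ p ∈ A, (p.2, p.1) ∈ A) (hreg : ∀ x, {y | (x, y) ∈ A}.ncard = k)
    {P : X → Prop} (hP : ∀ p ∈ A, (P p.1 ↔ ¬ P p.2)) :
    ∃ S : Set (Perm X), (∀ s ∈ S, s⁻¹ = s) ∧ (∀ s ∈ S, ∀ t ∈ S, s ≠ t → ∀ x, s x ≠ t x) ∧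
      A = permArcs S := by
  induction k generalizing A with
  | zero =>
    have hA : A = ∅ := Set.eq_empty_of_forall_notMem fun p hp =>
      ((Set.ncard_eq_zero (Set.toFinite _)).mp (hreg p.1)).subset hp
    exact ⟨∅, by simp, by simp, by simp [hA, permArcs]⟩
  | succ k ih =>
    obtain ⟨σ, hσ, hσA⟩ := exists_involution_forall_mem_of_regular_bipartite k.succ_pos hsym hreg hP
    have hσσ : ∀ x, σ (σ x) = x := fun x => by rw [← Perm.eq_inv_iff_eq, hσ]
    obtain ⟨S, hS_inv, hS_ne, hS⟩ := ih (A := {p ∈ A | σ p.1 ≠ p.2})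
      (fun p ⟨hp, hne⟩ => ⟨hsym p hp, fun h => hne (by dsimp only at h; rw [← h, hσσ])⟩)
      (fun x => by
        have : {y | (x, y) ∈ A ∧ σ x ≠ y} = {y | (x, y) ∈ A} \ {σ x} := by
          ext y; simp [eq_comm]
        simp only [Set.mem_ofPred_eq, this]
        rw [Set.ncard_sdiff_singleton_of_mem (show σ x ∈ {y | (x, y) ∈ A} from hσA x), hreg,
          Nat.add_sub_cancel])
      (fun p hp => hP p hp.1)
    have hσ_ne : ∀ t ∈ S, ∀ x, σ x ≠ t x := fun t ht x =>
      (show (x, t x) ∈ {p ∈ A | σ p.1 ≠ p.2} from hS ▸ ⟨t, ht, rfl⟩).2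
    refine ⟨insert σ S, ?_, ?_, ?_⟩
    · rintro s (rfl | hs)
      exacts [hσ, hS_inv s hs]
    · rintro s (rfl | hs) t (rfl | ht) hst x
      · exact absurd rfl hst
      · exact hσ_ne t ht x
      · exact (hσ_ne s hs x).symm
      · exact hS_ne s hs t ht hst x
    · rw [permArcs_insert, ← hS]
      ext ⟨x, y⟩
      constructor
      · intro hxy
        by_cases h : σ x = y
        exacts [Or.inl h, Or.inr ⟨hxy, h⟩]
      · rintro (h | h)
        · obtain rfl : σ x = y := h
          exact hσA x
        · exact h.1

theorem Equiv.Perm.mul_inv_eq_one_or_forall_ne {X : Type*} {s t : Perm X}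
    (hst : s ≠ t → ∀ x, s x ≠ t x) : s * t⁻¹ = 1 ∨ ∀ x, (s * t⁻¹) x ≠ x := by
  by_cases h : s = t
  · exact Or.inl (h ▸ mul_inv_cancel s)
  · exact Or.inr fun x hx => hst h (t⁻¹ x) (hx.trans (t.apply_symm_apply x).symm)

theorem stmt12_general {X : Type*} [Fintype X] (A : Set (X × X)) (k : ℕ)
    (hsimple : ∀ p ∈ A, p.1 ≠ p.2)
    (hsym : ∀ p ∈ A, (Prod.snd p, Prod.fst p) ∈ A)
    (hreg : ∀ x : X, {y : X | (x, y) ∈ A}.ncard = k)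
    (hbip : ∃ P : X → Prop, ∀ p ∈ A, (P p.1 ↔ ¬ P p.2)) :
    ∃ S : Set (Equiv.Perm X),
      (∀ s ∈ S, ∀ x : X, s x ≠ x) ∧
      (∀ s : Equiv.Perm X, s ∈ S ↔ s⁻¹ ∈ S) ∧
      (∀ x : X, {y : X | ∃ s ∈ S, s x = y} = {y : X | ∃ s ∈ S, s⁻¹ x = y}) ∧
      (∀ s ∈ S, ∀ t ∈ S, s * t⁻¹ = 1 ∨ ∀ x : X, (s * t⁻¹) x ≠ x) ∧
      A = {p : X × X | ∃ s ∈ S, s p.1 = p.2} := by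
  obtain ⟨P, hP⟩ := hbip
  obtain ⟨S, hS_inv, hS_ne, rfl⟩ :=
    exists_involutions_permArcs_eq_of_regular_bipartite k hsym hreg hP
  refine ⟨S, fun s hs x hx => hsimple (x, s x) ⟨s, hs, rfl⟩ hx.symm, fun s => ⟨?_, ?_⟩,
    fun x => Set.ext fun y => exists_congr fun s => and_congr_right fun hs => by rw [hS_inv s hs],
    fun s hs t ht => Perm.mul_inv_eq_one_or_forall_ne (hS_ne s hs t ht), rfl⟩
  · intro hs
    rwa [hS_inv s hs]
  · intro hs
    rw [← inv_inv s, hS_inv _ hs]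
    exact hs

/-- every finite regular bipartite simple graph (of positive valency) is
DA(X,S) for some closed self-inverse S ⊆ Der(X). -/
theorem stmt12 {X : Type*} [Fintype X] (A : Set (X × X)) (k : ℕ) (hk : 1 ≤ k)
    (hsimple : ∀ p ∈ A, p.1 ≠ p.2)
    (hsym : ∀ p ∈ A, (Prod.snd p, Prod.fst p) ∈ A)
    (hreg : ∀ x : X, {y : X | (x, y) ∈ A}.ncard = k)
    (hbip : ∃ P : X → Prop, ∀ p ∈ A, (P p.1 ↔ ¬ P p.2)) :
    ∃ S : Set (Equiv.Perm X),
      (∀ s ∈ S, ∀ x : X, s x ≠ x) ∧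
      (∀ s : Equiv.Perm X, s ∈ S ↔ s⁻¹ ∈ S) ∧
      (∀ x : X, {y : X | ∃ s ∈ S, s x = y} = {y : X | ∃ s ∈ S, s⁻¹ x = y}) ∧
      (∀ s ∈ S, ∀ t ∈ S, s * t⁻¹ = 1 ∨ ∀ x : X, (s * t⁻¹) x ≠ x) ∧
      A = {p : X × X | ∃ s ∈ S, s p.1 = p.2} :=
  stmt12_general A k hsimple hsym hreg hbip
end

section
/- Let S ⊆ Der(X) be nonempty with every element of S of finite order on each point (no infinite cycles). Then the connectivity equivalence classes of DA(X,S) are exactly the orbits of the subgroup ⟨S⟩ of Sym(X) generated by S. -/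
/-!
Every arc `x → s x` of `DA(X,S)` is a step by a generator, so connected points lie in one orbit
of `⟨S⟩`. Conversely, if `s^n x = x` with `n ≥ 1`, the arc `x → s x` is undone by the path of
`n - 1` arcs from `s x` to `s^n x = x`. Hence reachability is symmetric, and it is preserved by
products and inverses, so every element of `⟨S⟩` moves each point to a reachable one.
-/

open Equiv Relation

theorem Relation.ReflTransGen.symm_of_reverse {α : Type*} {r : α → α → Prop}
    (hrev : ∀ a b, r a b → ReflTransGen r b a) {a b : α} (hab : ReflTransGen r a b) :
    ReflTransGen r b a :=
  reflTransGen_closed (fun c d hcd => hrev d c hcd) b a (reflTransGen_swap.2 hab)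

namespace Equiv.Perm

variable {α : Type*} (S : Set (Perm α))

/-- The arc relation of the digraph `DA(α, S)`. -/
def arcRel (a b : α) : Prop := ∃ s ∈ S, s a = b

variable {S}

theorem mem_orbit_closure_of_reflTransGen_arcRel {x y : α}
    (h : ReflTransGen (arcRel S) x y) : y ∈ MulAction.orbit (Subgroup.closure S) x := by
  induction h with
  | refl => exact MulAction.mem_orbit_self x
  | tail _ hstep ih =>
    obtain ⟨g, rfl⟩ := ih
    obtain ⟨s, hs, rfl⟩ := hstep
    exact ⟨⟨s, Subgroup.subset_closure hs⟩ * g, rfl⟩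

theorem reflTransGen_arcRel_pow_apply {s : Perm α} (hs : s ∈ S) (x : α) (k : ℕ) :
    ReflTransGen (arcRel S) x ((s ^ k) x) := by
  induction k with
  | zero => exact ReflTransGen.refl
  | succ k ih => exact ih.tail ⟨s, hs, by rw [pow_succ', Perm.mul_apply]⟩

theorem reflTransGen_arcRel_symm
    (hfin : ∀ s ∈ S, ∀ x : α, ∃ n : ℕ, 1 ≤ n ∧ (s ^ n) x = x) {x y : α}
    (h : ReflTransGen (arcRel S) x y) :
    ReflTransGen (arcRel S) y x := by
  refine h.symm_of_reverse ?_
  rintro a _ ⟨s, hs, rfl⟩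
  obtain ⟨n, hn, hna⟩ := hfin s hs a
  have hback : (s ^ (n - 1)) (s a) = a := by
    rw [← Perm.mul_apply, pow_sub_one_mul (by omega), hna]
  simpa only [hback] using reflTransGen_arcRel_pow_apply hs (s a) (n - 1)

theorem reflTransGen_arcRel_apply_of_mem_closure
    (hfin : ∀ s ∈ S, ∀ x : α, ∃ n : ℕ, 1 ≤ n ∧ (s ^ n) x = x)
    {g : Perm α} (hg : g ∈ Subgroup.closure S) (x : α) : ReflTransGen (arcRel S) x (g x) := by
  induction hg using Subgroup.closure_induction generalizing x with
  | mem s hs => exact ReflTransGen.single ⟨s, hs, rfl⟩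
  | one => exact ReflTransGen.refl
  | mul g h _ _ ihg ihh => exact (ihh x).trans (ihg (h x))
  | inv g _ ihg =>
    simpa using reflTransGen_arcRel_symm hfin (ihg (g⁻¹ x))

theorem reflTransGen_arcRel_iff_mem_orbit_closure
    (hfin : ∀ s ∈ S, ∀ x : α, ∃ n : ℕ, 1 ≤ n ∧ (s ^ n) x = x) (x y : α) :
    ReflTransGen (arcRel S) x y ↔ y ∈ MulAction.orbit (Subgroup.closure S) x := by
  refine ⟨mem_orbit_closure_of_reflTransGen_arcRel, ?_⟩
  rintro ⟨⟨g, hg⟩, rfl⟩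
  exact reflTransGen_arcRel_apply_of_mem_closure hfin hg x

end Equiv.Perm

theorem stmt15_general {X : Type*} (S : Set (Equiv.Perm X))
    (hfin : ∀ s ∈ S, ∀ x : X, ∃ n : ℕ, 1 ≤ n ∧ (s ^ n) x = x) :
    ∀ x y : X, Relation.ReflTransGen (fun a b : X => ∃ s ∈ S, s a = b) x y ↔
      y ∈ MulAction.orbit (Subgroup.closure S) x :=
  Equiv.Perm.reflTransGen_arcRel_iff_mem_orbit_closure hfin

/-- the connectivity classes of DA(X,S) are exactly the orbits of ⟨S⟩. -/
theorem stmt15 {X : Type*} (S : Set (Equiv.Perm X)) (hne : S.Nonempty)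
    (hDer : ∀ s ∈ S, ∀ x : X, s x ≠ x)
    (hfin : ∀ s ∈ S, ∀ x : X, ∃ n : ℕ, 1 ≤ n ∧ (s ^ n) x = x) :
    ∀ x y : X, Relation.ReflTransGen (fun a b : X => ∃ s ∈ S, s a = b) x y ↔
      y ∈ MulAction.orbit (Subgroup.closure S) x :=
  stmt15_general S hfin
end
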